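/- arXiv:0711.0043 — 11 statements merged into one kernel-verified Lean document; each statement's English description precedes it below -/
import Mathlib

section
/- Deterministic single-copy transformations under the U(1)-SSR: Let p, q : ℤ → ℝ be standard-form weight distributions. The following are equivalent. (i) There exist shifts k : ℕ → ℤ, nonnegative coefficient functions c : ℕ → ℤ → ℝ, and nonnegative weights w : ℕ → ℝ with ∑' μ, w μ = 1, such that ∑' μ, (c μ n)² = 1 for every n with p n ≠ 0, and (c μ n)² · p n = w μ · q (n + k μ) for every μ ∈ ℕ and every n ∈ ℤ (i.e., the transformation from p to q is achieved by a trace-preserving U(1)-invariant Kraus family, each Kraus operator mapping the input pure state to √(w μ) times the target pure state). (ii) p is a convex combination of shifts of q: there exists v : ℤ → ℝ with v k ≥ 0 for all k, ∑' k, v k = 1, and p n = ∑' k, v k · q (n + k) for every n ∈ ℤ. -/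
/-- **Deterministic single-copy transformations under the U(1)-SSR.**
A trace-preserving U(1)-invariant Kraus family maps the standard-form pure state
with weights `p` to the one with weights `q` iff `p` is a convex combination of
shifts of `q`. -/
theorem u1_deterministic_transformation
    (p q : ℤ → ℝ)
    (hp0 : ∀ n, 0 ≤ p n) (hpneg : ∀ n < 0, p n = 0)
    (hpfin : (Function.support p).Finite) (hpsum : ∑' n, p n = 1)
    (hq0 : ∀ n, 0 ≤ q n) (hqneg : ∀ n < 0, q n = 0)
    (hqfin : (Function.support q).Finite) (hqsum : ∑' n, q n = 1) :
    (∃ (k : ℕ → ℤ) (c : ℕ → ℤ → ℝ) (w : ℕ → ℝ),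
        (∀ μ n, 0 ≤ c μ n) ∧ (∀ μ, 0 ≤ w μ) ∧ (∑' μ, w μ = 1) ∧
        (∀ n, p n ≠ 0 → ∑' μ, (c μ n) ^ 2 = 1) ∧
        (∀ μ n, (c μ n) ^ 2 * p n = w μ * q (n + k μ))) ↔
      (∃ v : ℤ → ℝ, (∀ k, 0 ≤ v k) ∧ (∑' k, v k = 1) ∧
        ∀ n, p n = ∑' k, v k * q (n + k)) := by
  constructor
  · rintro ⟨k, c, w, hc0, hw0, hwsum, hctsum, hK⟩
    have hwsummable : Summable w := by
      by_contra h
      rw [tsum_eq_zero_of_not_summable h] at hwsum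
      norm_num at hwsum
    refine ⟨fun j => ∑' (μ : k ⁻¹' {j}), w μ,
      fun j => tsum_nonneg (fun μ => hw0 μ), ?_, ?_⟩
    · rw [(hwsummable.hasSum.tsum_fiberwise k).tsum_eq]
      exact hwsum
    · intro n
      have hfsum : Summable (fun μ => w μ * q (n + k μ)) := by
        by_cases hpn : p n = 0
        · have : (fun μ => w μ * q (n + k μ)) = fun _ => (0 : ℝ) := by
            funext μ
            rw [← hK μ n, hpn, mul_zero]
          rw [this]; exact summable_zero
        · have hcs : Summable (fun μ => (c μ n) ^ 2) := by
            by_contra h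
            have h1 := hctsum n hpn
            rw [tsum_eq_zero_of_not_summable h] at h1
            norm_num at h1
          have := hcs.mul_right (p n)
          have heq : (fun μ => w μ * q (n + k μ)) = fun μ => (c μ n) ^ 2 * p n := by
            funext μ; rw [hK μ n]
          rw [heq]; exact this
      have key : ∑' j, (∑' (μ : k ⁻¹' {j}), w μ) * q (n + j)
          = ∑' μ, w μ * q (n + k μ) := by
        rw [← (hfsum.hasSum.tsum_fiberwise k).tsum_eq]
        refine tsum_congr fun j => ?_
        rw [← tsum_mul_right]
        refine tsum_congr fun μ => ?_
        have hj : k ↑μ = j := μ.2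
        rw [hj]
      rw [key]
      by_cases hpn : p n = 0
      · have hz : ∀ μ, w μ * q (n + k μ) = 0 := fun μ => by
          rw [← hK μ n, hpn, mul_zero]
        rw [hpn]
        simp [hz]
      · calc p n = (∑' μ, (c μ n) ^ 2) * p n := by rw [hctsum n hpn, one_mul]
          _ = ∑' μ, (c μ n) ^ 2 * p n := tsum_mul_right.symm
          _ = ∑' μ, w μ * q (n + k μ) := tsum_congr fun μ => hK μ n
  · rintro ⟨v, hv0, hvsum, hveq⟩
    have hvsummable : Summable v := by
      by_contra h
      rw [tsum_eq_zero_of_not_summable h] at hvsum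
      norm_num at hvsum
    have hqsummable : Summable q :=
      summable_of_ne_finset_zero (s := hqfin.toFinset)
        (fun m hm => by simpa [Function.support] using fun h => hm (hqfin.mem_toFinset.mpr h))
    have hq1 : ∀ m, q m ≤ 1 := fun m =>
      hqsum ▸ Summable.le_tsum hqsummable m (fun _ _ => hq0 _)
    have hsummn : ∀ n, Summable (fun j => v j * q (n + j)) := fun n =>
      hvsummable.of_nonneg_of_le
        (fun j => mul_nonneg (hv0 j) (hq0 _))
        (fun j => by
          calc v j * q (n + j) ≤ v j * 1 :=
                mul_le_mul_of_nonneg_left (hq1 _) (hv0 j)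
            _ = v j := mul_one _)
    have hzero : ∀ n, p n = 0 → ∀ j, v j * q (n + j) = 0 := by
      intro n hpn j
      have hle : v j * q (n + j) ≤ p n := by
        rw [hveq n]
        exact Summable.le_tsum (hsummn n) j (fun i _ => mul_nonneg (hv0 i) (hq0 _))
      exact le_antisymm (hpn ▸ hle) (mul_nonneg (hv0 j) (hq0 _))
    let e : ℕ ≃ ℤ := (Denumerable.eqv ℤ).symm
    refine ⟨fun μ => e μ, fun μ n => Real.sqrt (v (e μ) * q (n + e μ) / p n),
      fun μ => v (e μ), fun μ n => Real.sqrt_nonneg _, fun μ => hv0 _, ?_, ?_, ?_⟩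
    · rw [e.tsum_eq v]; exact hvsum
    · intro n hpn
      have hsq : ∀ μ : ℕ, (Real.sqrt (v (e μ) * q (n + e μ) / p n)) ^ 2
          = v (e μ) * q (n + e μ) / p n := fun μ =>
        Real.sq_sqrt (div_nonneg (mul_nonneg (hv0 _) (hq0 _)) (hp0 n))
      calc ∑' μ, (Real.sqrt (v (e μ) * q (n + e μ) / p n)) ^ 2
          = ∑' μ, v (e μ) * q (n + e μ) / p n := tsum_congr hsq
        _ = (∑' μ, v (e μ) * q (n + e μ)) / p n := tsum_div_const
        _ = (∑' j, v j * q (n + j)) / p n := by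
            rw [e.tsum_eq (fun j => v j * q (n + j))]
        _ = p n / p n := by rw [← hveq n]
        _ = 1 := div_self hpn
    · intro μ n
      by_cases hpn : p n = 0
      · rw [hpn, mul_zero]
        exact (hzero n hpn (e μ)).symm
      · rw [Real.sq_sqrt (div_nonneg (mul_nonneg (hv0 _) (hq0 _)) (hp0 n)),
          div_mul_cancel₀ _ hpn]
end

section
/- Stochastic single-copy transformations under the U(1)-SSR: Let p, q : ℤ → ℝ be standard-form weight distributions. The following are equivalent. (i) There exist k ∈ ℤ, λ > 0, and c : ℤ → ℝ with 0 ≤ c n ≤ 1 for all n, such that (c n)² · p n = λ · q (n + k) for every n ∈ ℤ (i.e., some single U(1)-invariant Kraus operator maps the pure state with weights p to √λ times the pure state with weights q). (ii) There exists k ∈ ℤ such that for every n ∈ ℤ, q (n + k) ≠ 0 implies p n ≠ 0 (the number spectrum of q is contained in the number spectrum of p shifted by k). -/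
/-!
A single Kraus operator can only shrink weights, never create them, so the shifted
spectrum of `q` must lie in that of `p`. Conversely, if it does, choose `λ > 0` below the
finitely many ratios `p n / q (n + k)` on the support of the shifted `q` and take
`c n = √(λ q (n + k) / p n)`, which lies in `[0, 1]`.
-/

open Filter Set Function Topology

theorem Set.Finite.exists_pos_forall_le {α : Type*} {s : Set α} (hs : s.Finite) {f : α → ℝ}
    (hf : ∀ x ∈ s, 0 < f x) : ∃ ε > 0, ∀ x ∈ s, ε ≤ f x := by
  have hle : ∀ᶠ ε in 𝓝[>] (0 : ℝ), ∀ x ∈ s, ε ≤ f x :=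
    (eventually_all_finite hs).2 fun x hx =>
      nhdsWithin_le_nhds (eventually_le_nhds (hf x hx))
  exact (hle.and self_mem_nhdsWithin).exists.imp fun ε h => ⟨h.2, h.1⟩

theorem support_subset_of_sq_mul_eq {α : Type*} {p r c : α → ℝ} {lam : ℝ} (hlam : lam ≠ 0)
    (h : ∀ n, c n ^ 2 * p n = lam * r n) : support r ⊆ support p := by
  intro n hr hp
  have := h n
  rw [hp, mul_zero, eq_comm, mul_eq_zero] at this
  exact this.elim hlam hr

theorem exists_sq_mul_eq_of_support_subset {α : Type*} {p r : α → ℝ} (hp : ∀ n, 0 ≤ p n)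
    (hr : ∀ n, 0 ≤ r n) (hsupp : support r ⊆ support p) (hfin : (support r).Finite) :
    ∃ lam > 0, ∃ c : α → ℝ, (∀ n, 0 ≤ c n ∧ c n ≤ 1) ∧ ∀ n, c n ^ 2 * p n = lam * r n := by
  have hpos : ∀ n ∈ support r, 0 < p n / r n := fun n hn =>
    div_pos ((hp n).lt_of_ne' (hsupp hn)) ((hr n).lt_of_ne' hn)
  obtain ⟨lam, hlam, hle⟩ := hfin.exists_pos_forall_le hpos
  have hratio_le_one : ∀ n, lam * r n / p n ≤ 1 := by
    intro n
    by_cases hrn : r n = 0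
    · simp [hrn]
    have hpn : 0 < p n := (hp n).lt_of_ne' (hsupp hrn)
    rw [div_le_one hpn, ← le_div_iff₀ ((hr n).lt_of_ne' hrn)]
    exact hle n hrn
  refine ⟨lam, hlam, fun n => √(lam * r n / p n),
    fun n => ⟨Real.sqrt_nonneg _, Real.sqrt_le_one.mpr (hratio_le_one n)⟩, fun n => ?_⟩
  by_cases hpn : p n = 0
  · have hrn : r n = 0 := not_not.mp fun hrn => hsupp hrn hpn
    simp [hpn, hrn]
  rw [Real.sq_sqrt (div_nonneg (mul_nonneg hlam.le (hr n)) (hp n)), div_mul_cancel₀ _ hpn]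

theorem u1_stochastic_transformation_general
    (p q : ℤ → ℝ)
    (hp0 : ∀ n, 0 ≤ p n)
    (hq0 : ∀ n, 0 ≤ q n)
    (hqfin : (Function.support q).Finite) :
    (∃ (k : ℤ) (lam : ℝ) (c : ℤ → ℝ),
        0 < lam ∧ (∀ n, 0 ≤ c n ∧ c n ≤ 1) ∧
        (∀ n, (c n) ^ 2 * p n = lam * q (n + k))) ↔
      (∃ k : ℤ, ∀ n, q (n + k) ≠ 0 → p n ≠ 0) := by
  constructor
  · rintro ⟨k, lam, c, hlam, -, h⟩
    exact ⟨k, support_subset_of_sq_mul_eq (r := fun n => q (n + k)) hlam.ne' h⟩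
  · rintro ⟨k, hk⟩
    have hfin : (support fun n => q (n + k)).Finite :=
      hqfin.preimage (add_left_injective k).injOn
    obtain ⟨lam, hlam, c, hc, h⟩ :=
      exists_sq_mul_eq_of_support_subset hp0 (fun n => hq0 (n + k)) hk hfin
    exact ⟨k, lam, c, hlam, hc, h⟩

/-- **Stochastic single-copy transformations under the U(1)-SSR.**
A single U(1)-invariant Kraus operator maps the standard-form pure state with
weights `p` to `√λ` times the one with weights `q` (for some `λ > 0`) iff the
number spectrum of `q` is contained in a shift of the number spectrum of `p`. -/
theorem u1_stochastic_transformation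
    (p q : ℤ → ℝ)
    (hp0 : ∀ n, 0 ≤ p n) (hpneg : ∀ n < 0, p n = 0)
    (hpfin : (Function.support p).Finite) (hpsum : ∑' n, p n = 1)
    (hq0 : ∀ n, 0 ≤ q n) (hqneg : ∀ n < 0, q n = 0)
    (hqfin : (Function.support q).Finite) (hqsum : ∑' n, q n = 1) :
    (∃ (k : ℤ) (lam : ℝ) (c : ℤ → ℝ),
        0 < lam ∧ (∀ n, 0 ≤ c n ∧ c n ≤ 1) ∧
        (∀ n, (c n) ^ 2 * p n = lam * q (n + k))) ↔
      (∃ k : ℤ, ∀ n, q (n + k) ≠ 0 → p n ≠ 0) :=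
  u1_stochastic_transformation_general p q hp0 hq0 hqfin
end

section
/- Maximum probability of conversion under the U(1)-SSR: Let p, q : ℤ → ℝ be standard-form weight distributions, and suppose there is a unique k₀ ∈ ℤ such that for all n ∈ ℤ, q (n + k₀) ≠ 0 implies p n ≠ 0. Then the set of achievable conversion probabilities { λ : ℝ | there exist shifts k : ℕ → ℤ, nonnegative coefficients c : ℕ → ℤ → ℝ with ∑' μ, (c μ n)² ≤ 1 for every n ∈ ℤ, and nonnegative weights w : ℕ → ℝ such that (c μ n)² · p n = w μ · q (n + k μ) for all μ and n, and λ = ∑' μ, w μ } has a greatest element, equal to the minimum of p n / q (n + k₀) over the (finitely many, and at least one) n with q (n + k₀) ≠ 0. -/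
/-!
Only Kraus operators with nonzero weight matter, and for such an operator the relation
`(c n)² · p n = w · q (n + k)` forces the shifted support of `q` into the support of `p`, so its
shift is `k₀`. At a point `n₀` attaining the minimal ratio `m = p n₀ / q (n₀ + k₀)` the relation
gives `(c_μ n₀)² = w_μ / m`, and trace-nonincreasingness at `n₀` yields `∑ w_μ ≤ m`. Conversely the
single operator with shift `k₀` and `c n = √(m · q (n + k₀) / p n)` achieves `m`.
-/

open Function

def shiftedRatios (p q : ℤ → ℝ) (k : ℤ) : Set ℝ :=
  {r | ∃ n, q (n + k) ≠ 0 ∧ r = p n / q (n + k)}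

/-- Total weights of trace-nonincreasing U(1)-invariant Kraus families converting `p` into `q`. -/
def conversionProbabilities (p q : ℤ → ℝ) : Set ℝ :=
  {lam | ∃ (k : ℕ → ℤ) (c : ℕ → ℤ → ℝ) (w : ℕ → ℝ),
    (∀ μ n, 0 ≤ c μ n) ∧ (∀ n, ∑' μ, (c μ n) ^ 2 ≤ 1) ∧ (∀ μ, 0 ≤ w μ) ∧
    (∀ μ n, (c μ n) ^ 2 * p n = w μ * q (n + k μ)) ∧ lam = ∑' μ, w μ}

lemma shiftedRatios_finite {q : ℤ → ℝ} (hq : (support q).Finite) (p : ℤ → ℝ) (k : ℤ) :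
    (shiftedRatios p q k).Finite := by
  have hshift : (support fun n => q (n + k)).Finite :=
    hq.preimage (add_left_injective k).injOn
  refine (hshift.image fun n => p n / q (n + k)).subset ?_
  rintro _ ⟨n, hn, rfl⟩
  exact ⟨n, hn, rfl⟩

lemma shiftedRatios_nonempty {q : ℤ → ℝ} (hq : q ≠ 0) (p : ℤ → ℝ) (k : ℤ) :
    (shiftedRatios p q k).Nonempty := by
  obtain ⟨n, hn⟩ := Function.ne_iff.mp hq
  exact ⟨_, n - k, by simpa using hn, rfl⟩

lemma shiftedRatios_nonneg {p q : ℤ → ℝ} (hp : ∀ n, 0 ≤ p n) (hq : ∀ n, 0 ≤ q n) {k : ℤ}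
    {r : ℝ} (hr : r ∈ shiftedRatios p q k) : 0 ≤ r := by
  obtain ⟨n, -, rfl⟩ := hr
  exact div_nonneg (hp n) (hq _)

lemma mem_conversionProbabilities_of_single {p q : ℤ → ℝ} {k : ℤ} {c : ℤ → ℝ} {w : ℝ}
    (hc : ∀ n, 0 ≤ c n) (hc1 : ∀ n, c n ^ 2 ≤ 1) (hw : 0 ≤ w)
    (hkraus : ∀ n, c n ^ 2 * p n = w * q (n + k)) :
    w ∈ conversionProbabilities p q := by
  refine ⟨fun _ => k, fun μ n => if μ = 0 then c n else 0, fun μ => if μ = 0 then w else 0,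
    fun μ n => ?_, fun n => ?_, fun μ => ?_, fun μ n => ?_, (tsum_ite_eq 0 fun _ => w).symm⟩
  · dsimp only
    split_ifs
    exacts [hc n, le_rfl]
  · rw [tsum_eq_single 0 fun μ hμ => by simp [hμ]]
    simpa only [↓reduceIte] using hc1 n
  · dsimp only
    split_ifs
    exacts [hw, le_rfl]
  · dsimp only
    split_ifs
    exacts [hkraus n, by simp]

lemma mem_conversionProbabilities_of_mem_lowerBounds {p q : ℤ → ℝ} (hp : ∀ n, 0 ≤ p n)
    (hq : ∀ n, 0 ≤ q n) {k : ℤ} (hk : ∀ n, q (n + k) ≠ 0 → p n ≠ 0) {m : ℝ} (hm0 : 0 ≤ m)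
    (hm : m ∈ lowerBounds (shiftedRatios p q k)) : m ∈ conversionProbabilities p q := by
  have hsq : ∀ n, √(m * q (n + k) / p n) ^ 2 = m * q (n + k) / p n := fun n =>
    Real.sq_sqrt (div_nonneg (mul_nonneg hm0 (hq _)) (hp n))
  have hpos : ∀ n, q (n + k) ≠ 0 → 0 < p n := fun n hqn => (hp n).lt_of_ne' (hk n hqn)
  refine mem_conversionProbabilities_of_single (k := k) (c := fun n => √(m * q (n + k) / p n))
    (fun n => Real.sqrt_nonneg _) (fun n => ?_) hm0 (fun n => ?_)
  · rcases eq_or_ne (q (n + k)) 0 with hqn | hqn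
    · simp [hqn]
    rw [hsq, div_le_one (hpos n hqn), ← le_div_iff₀ ((hq _).lt_of_ne' hqn)]
    exact hm ⟨n, hqn, rfl⟩
  · rcases eq_or_ne (q (n + k)) 0 with hqn | hqn
    · simp [hqn]
    rw [hsq, div_mul_cancel₀ _ (hpos n hqn).ne']

lemma shiftedRatios_subset_upperBounds {p q : ℤ → ℝ} (hp : ∀ n, 0 ≤ p n) (hq : ∀ n, 0 ≤ q n)
    {k₀ : ℤ} (hk₀ : ∀ n, q (n + k₀) ≠ 0 → p n ≠ 0)
    (huniq : ∀ k : ℤ, (∀ n, q (n + k) ≠ 0 → p n ≠ 0) → k = k₀) :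
    shiftedRatios p q k₀ ⊆ upperBounds (conversionProbabilities p q) := by
  rintro _ ⟨n₀, hqn₀, rfl⟩ _ ⟨k, c, w, -, hc1, -, hkraus, rfl⟩
  have hpn₀ : 0 < p n₀ := (hp n₀).lt_of_ne' (hk₀ n₀ hqn₀)
  have hshift : ∀ μ, w μ ≠ 0 → k μ = k₀ := fun μ hw =>
    huniq _ fun n hqn hpn => mul_ne_zero hw hqn (by rw [← hkraus, hpn, mul_zero])
  -- operators of zero weight vanish at `n₀`, all others have shift `k₀`
  have hweight : ∀ μ, c μ n₀ ^ 2 = w μ * (q (n₀ + k₀) / p n₀) := by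
    intro μ
    rw [← mul_div_assoc, eq_div_iff hpn₀.ne', hkraus]
    rcases eq_or_ne (w μ) 0 with hw | hw
    · simp [hw]
    · rw [hshift μ hw]
  have hsum : (∑' μ, w μ) * (q (n₀ + k₀) / p n₀) ≤ 1 := by
    simpa only [hweight, tsum_mul_right] using hc1 n₀
  rwa [← le_div_iff₀ (div_pos ((hq _).lt_of_ne' hqn₀) hpn₀), one_div_div] at hsum

theorem u1_max_probability_general
    (p q : ℤ → ℝ)
    (hp0 : ∀ n, 0 ≤ p n)
    (hq0 : ∀ n, 0 ≤ q n)
    (hqfin : (Function.support q).Finite) (hqsum : ∑' n, q n = 1)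
    (k₀ : ℤ) (hk₀ : ∀ n, q (n + k₀) ≠ 0 → p n ≠ 0)
    (huniq : ∀ k : ℤ, (∀ n, q (n + k) ≠ 0 → p n ≠ 0) → k = k₀) :
    ∃ m : ℝ,
      IsLeast {r : ℝ | ∃ n : ℤ, q (n + k₀) ≠ 0 ∧ r = p n / q (n + k₀)} m ∧
      IsGreatest {lam : ℝ | ∃ (k : ℕ → ℤ) (c : ℕ → ℤ → ℝ) (w : ℕ → ℝ),
        (∀ μ n, 0 ≤ c μ n) ∧ (∀ n, ∑' μ, (c μ n) ^ 2 ≤ 1) ∧ (∀ μ, 0 ≤ w μ) ∧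
        (∀ μ n, (c μ n) ^ 2 * p n = w μ * q (n + k μ)) ∧
        lam = ∑' μ, w μ} m := by
  have hq : q ≠ 0 := by
    rintro rfl
    simp at hqsum
  obtain ⟨m, hm⟩ := (shiftedRatios_finite hqfin p k₀).isCompact.exists_isLeast
    (shiftedRatios_nonempty hq p k₀)
  refine ⟨m, hm, ?_, shiftedRatios_subset_upperBounds hp0 hq0 hk₀ huniq hm.1⟩
  exact mem_conversionProbabilities_of_mem_lowerBounds hp0 hq0 hk₀
    (shiftedRatios_nonneg hp0 hq0 hm.1) hm.2

/-- **Maximum probability of conversion under the U(1)-SSR.**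
If there is a unique shift `k₀` such that the number spectrum of `q` lies inside the
shifted number spectrum of `p`, then the set of achievable conversion probabilities
(via trace-nonincreasing U(1)-invariant Kraus families) has a greatest element, equal
to the minimum of `p n / q (n + k₀)` over the `n` with `q (n + k₀) ≠ 0`. -/
theorem u1_max_probability
    (p q : ℤ → ℝ)
    (hp0 : ∀ n, 0 ≤ p n) (hpneg : ∀ n < 0, p n = 0)
    (hpfin : (Function.support p).Finite) (hpsum : ∑' n, p n = 1)
    (hq0 : ∀ n, 0 ≤ q n) (hqneg : ∀ n < 0, q n = 0)
    (hqfin : (Function.support q).Finite) (hqsum : ∑' n, q n = 1)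
    (k₀ : ℤ) (hk₀ : ∀ n, q (n + k₀) ≠ 0 → p n ≠ 0)
    (huniq : ∀ k : ℤ, (∀ n, q (n + k) ≠ 0 → p n ≠ 0) → k = k₀) :
    ∃ m : ℝ,
      IsLeast {r : ℝ | ∃ n : ℤ, q (n + k₀) ≠ 0 ∧ r = p n / q (n + k₀)} m ∧
      IsGreatest {lam : ℝ | ∃ (k : ℕ → ℤ) (c : ℕ → ℤ → ℝ) (w : ℕ → ℝ),
        (∀ μ n, 0 ≤ c μ n) ∧ (∀ n, ∑' μ, (c μ n) ^ 2 ≤ 1) ∧ (∀ μ, 0 ≤ w μ) ∧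
        (∀ μ n, (c μ n) ^ 2 * p n = w μ * q (n + k μ)) ∧
        lam = ∑' μ, w μ} m :=
  u1_max_probability_general p q hp0 hq0 hqfin hqsum k₀ hk₀ huniq
end

section
/- Deterministic single-copy transformations under the Z₂-SSR: Let (p₀,p₁) and (q₀,q₁) be standard-form weight pairs of Z₂-noninvariant pure states (all four entries strictly positive, each pair summing to 1). The following are equivalent. (i) There exists a finite trace-preserving Z₂-invariant Kraus family achieving the transformation deterministically: a finite index set with, for each index μ, a bit B_μ ∈ {0,1}, nonnegative coefficients c₀_μ, c₁_μ, and a weight v_μ ≥ 0, such that ∑_μ v_μ = 1, ∑_μ (c₀_μ)² = 1, ∑_μ (c₁_μ)² = 1, and for each μ: if B_μ = 0 then (c₀_μ)²·p₀ = v_μ·q₀ and (c₁_μ)²·p₁ = v_μ·q₁, while if B_μ = 1 then (c₀_μ)²·p₀ = v_μ·q₁ and (c₁_μ)²·p₁ = v_μ·q₀. (ii) C(p₀,p₁) ≥ C(q₀,q₁), that is, min(p₀,p₁) ≥ min(q₀,q₁). -/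
/-! Each Kraus operator sends the parity-`b` weight of the input to the parity-`b` or the
parity-`(1 - b)` weight of the output, so, reading off the trace-preservation constraints, `p₀` and
`p₁` are both convex combinations of `q₀` and `q₁` and hence at least `min q₀ q₁`. Conversely, if
`min q₀ q₁ ≤ min p₀ p₁` then `p₀ = a q₀ + b q₁` and `p₁ = a q₁ + b q₀` for some probability
vector `(a, b)`, and two Kraus operators, one preserving and one exchanging the parities, with
outcome probabilities `a` and `b` do the job. -/

open Finset

/-- `v i` is the probability of outcome `i`, and `B i` records whether the `i`-th Kraus operator
exchanges the two parity sectors. -/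
def IsDeterministicZ2KrausFamily {ι : Type*} [Fintype ι] (p₀ p₁ q₀ q₁ : ℝ) (B : ι → Bool)
    (c₀ c₁ v : ι → ℝ) : Prop :=
  (∀ i, 0 ≤ c₀ i) ∧ (∀ i, 0 ≤ c₁ i) ∧ (∀ i, 0 ≤ v i) ∧
    (∑ i, v i = 1) ∧ (∑ i, (c₀ i) ^ 2 = 1) ∧ (∑ i, (c₁ i) ^ 2 = 1) ∧
    (∀ i, if B i then
        (c₀ i) ^ 2 * p₀ = v i * q₁ ∧ (c₁ i) ^ 2 * p₁ = v i * q₀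
      else
        (c₀ i) ^ 2 * p₀ = v i * q₀ ∧ (c₁ i) ^ 2 * p₁ = v i * q₁)

section Necessity

variable {ι : Type*} [Fintype ι]

theorem eq_sum_mul_of_sum_sq_eq_one {c v r : ι → ℝ} {p : ℝ} (hc : ∑ i, c i ^ 2 = 1)
    (h : ∀ i, c i ^ 2 * p = v i * r i) : p = ∑ i, v i * r i := by
  calc p = ∑ i, c i ^ 2 * p := by rw [← sum_mul, hc, one_mul]
    _ = ∑ i, v i * r i := sum_congr rfl fun i _ => h i

theorem le_sum_mul_of_forall_le {v r : ι → ℝ} {m : ℝ} (hv : ∀ i, 0 ≤ v i) (hv₁ : ∑ i, v i = 1)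
    (hm : ∀ i, m ≤ r i) : m ≤ ∑ i, v i * r i := by
  calc m = ∑ i, v i * m := by rw [← sum_mul, hv₁, one_mul]
    _ ≤ ∑ i, v i * r i := sum_le_sum fun i _ => mul_le_mul_of_nonneg_left (hm i) (hv i)

theorem IsDeterministicZ2KrausFamily.min_le {p₀ p₁ q₀ q₁ : ℝ} {B : ι → Bool} {c₀ c₁ v : ι → ℝ}
    (hf : IsDeterministicZ2KrausFamily p₀ p₁ q₀ q₁ B c₀ c₁ v) : min q₀ q₁ ≤ min p₀ p₁ := by
  obtain ⟨-, -, hv, hv₁, hc₀, hc₁, hk⟩ := hf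
  have hk₀ : ∀ i, c₀ i ^ 2 * p₀ = v i * if B i then q₁ else q₀ := fun i => by
    have hki := hk i
    split_ifs at hki ⊢ <;> exact hki.1
  have hk₁ : ∀ i, c₁ i ^ 2 * p₁ = v i * if B i then q₀ else q₁ := fun i => by
    have hki := hk i
    split_ifs at hki ⊢ <;> exact hki.2
  refine le_min ?_ ?_
  · rw [eq_sum_mul_of_sum_sq_eq_one hc₀ hk₀]
    exact le_sum_mul_of_forall_le hv hv₁ fun i => by cases B i <;> simp
  · rw [eq_sum_mul_of_sum_sq_eq_one hc₁ hk₁]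
    exact le_sum_mul_of_forall_le hv hv₁ fun i => by cases B i <;> simp

end Necessity

theorem exists_convex_comb_of_min_le {p₀ p₁ q₀ q₁ : ℝ} (hsum : p₀ + p₁ = q₀ + q₁)
    (h : min q₀ q₁ ≤ min p₀ p₁) : ∃ a b : ℝ, 0 ≤ a ∧ 0 ≤ b ∧ a + b = 1 ∧ a * q₀ + b * q₁ = p₀ := by
  change p₀ ∈ segment ℝ q₀ q₁
  rw [segment_eq_uIcc]
  have := min_add_max q₀ q₁
  exact ⟨h.trans (min_le_left _ _), by linarith [h.trans (min_le_right p₀ p₁)]⟩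

theorem exists_isDeterministicZ2KrausFamily_fin_two {p₀ p₁ q₀ q₁ a b : ℝ} (hp₀ : 0 < p₀)
    (hp₁ : 0 < p₁) (hq₀ : 0 ≤ q₀) (hq₁ : 0 ≤ q₁) (ha : 0 ≤ a) (hb : 0 ≤ b) (hab : a + b = 1)
    (h₀ : a * q₀ + b * q₁ = p₀) (h₁ : a * q₁ + b * q₀ = p₁) :
    ∃ (B : Fin 2 → Bool) (c₀ c₁ v : Fin 2 → ℝ),
      IsDeterministicZ2KrausFamily p₀ p₁ q₀ q₁ B c₀ c₁ v := by
  have sq_sqrt_div_mul {x y : ℝ} (hx : 0 ≤ x) (hy : 0 < y) : √(x / y) ^ 2 * y = x := by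
    rw [Real.sq_sqrt (div_nonneg hx hy.le), div_mul_cancel₀ _ hy.ne']
  have sq_sqrt_div_add {x y z : ℝ} (hx : 0 ≤ x) (hy : 0 ≤ y) (hz : 0 < z) (h : x + y = z) :
      √(x / z) ^ 2 + √(y / z) ^ 2 = 1 := by
    rw [Real.sq_sqrt (div_nonneg hx hz.le), Real.sq_sqrt (div_nonneg hy hz.le), ← add_div, h,
      div_self hz.ne']
  have ha₀ := mul_nonneg ha hq₀
  have ha₁ := mul_nonneg ha hq₁
  have hb₀ := mul_nonneg hb hq₀
  have hb₁ := mul_nonneg hb hq₁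
  refine ⟨![false, true], ![√(a * q₀ / p₀), √(b * q₁ / p₀)], ![√(a * q₁ / p₁), √(b * q₀ / p₁)],
    ![a, b], ?_, ?_, ?_, ?_, ?_, ?_, ?_⟩
  · exact Fin.forall_fin_two.2 ⟨Real.sqrt_nonneg _, Real.sqrt_nonneg _⟩
  · exact Fin.forall_fin_two.2 ⟨Real.sqrt_nonneg _, Real.sqrt_nonneg _⟩
  · exact Fin.forall_fin_two.2 ⟨ha, hb⟩
  · exact (Fin.sum_univ_two _).trans hab
  · exact (Fin.sum_univ_two _).trans (sq_sqrt_div_add ha₀ hb₁ hp₀ h₀)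
  · exact (Fin.sum_univ_two _).trans (sq_sqrt_div_add ha₁ hb₀ hp₁ h₁)
  · exact Fin.forall_fin_two.2
      ⟨⟨sq_sqrt_div_mul ha₀ hp₀, sq_sqrt_div_mul ha₁ hp₁⟩,
        ⟨sq_sqrt_div_mul hb₁ hp₀, sq_sqrt_div_mul hb₀ hp₁⟩⟩

theorem z2_deterministic_transformation_general
    (p₀ p₁ q₀ q₁ : ℝ)
    (hp : p₀ + p₁ = 1)
    (hq₀ : 0 < q₀) (hq₁ : 0 < q₁) (hq : q₀ + q₁ = 1) :
    (∃ (n : ℕ) (B : Fin n → Bool) (c₀ c₁ v : Fin n → ℝ),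
        (∀ i, 0 ≤ c₀ i) ∧ (∀ i, 0 ≤ c₁ i) ∧ (∀ i, 0 ≤ v i) ∧
        (∑ i, v i = 1) ∧ (∑ i, (c₀ i) ^ 2 = 1) ∧ (∑ i, (c₁ i) ^ 2 = 1) ∧
        (∀ i, if B i then
            (c₀ i) ^ 2 * p₀ = v i * q₁ ∧ (c₁ i) ^ 2 * p₁ = v i * q₀
          else
            (c₀ i) ^ 2 * p₀ = v i * q₀ ∧ (c₁ i) ^ 2 * p₁ = v i * q₁)) ↔
      2 * min q₀ q₁ ≤ 2 * min p₀ p₁ := by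
  change (∃ (n : ℕ) (B : Fin n → Bool) (c₀ c₁ v : Fin n → ℝ),
    IsDeterministicZ2KrausFamily p₀ p₁ q₀ q₁ B c₀ c₁ v) ↔ _
  rw [mul_le_mul_iff_right₀ two_pos]
  constructor
  · rintro ⟨n, B, c₀, c₁, v, hf⟩
    exact hf.min_le
  · intro h
    have hpos : 0 < min q₀ q₁ := lt_min hq₀ hq₁
    obtain ⟨a, b, ha, hb, hab, h₀⟩ := exists_convex_comb_of_min_le (hp.trans hq.symm) h
    exact ⟨2, exists_isDeterministicZ2KrausFamily_fin_two
      (hpos.trans_le (h.trans (min_le_left _ _))) (hpos.trans_le (h.trans (min_le_right _ _)))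
      hq₀.le hq₁.le ha hb hab h₀ (by linear_combination (q₀ + q₁) * hab + hq - h₀ - hp)⟩

/-- **Deterministic single-copy transformations under the Z₂-SSR.**
For Z₂-noninvariant pure states with standard-form weight pairs `(p₀, p₁)` and
`(q₀, q₁)`, a deterministic (trace-preserving) Z₂-invariant Kraus family achieving
the transformation exists iff `C(p₀,p₁) = 2·min(p₀,p₁) ≥ C(q₀,q₁) = 2·min(q₀,q₁)`. -/
theorem z2_deterministic_transformation
    (p₀ p₁ q₀ q₁ : ℝ)
    (hp₀ : 0 < p₀) (hp₁ : 0 < p₁) (hp : p₀ + p₁ = 1)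
    (hq₀ : 0 < q₀) (hq₁ : 0 < q₁) (hq : q₀ + q₁ = 1) :
    (∃ (n : ℕ) (B : Fin n → Bool) (c₀ c₁ v : Fin n → ℝ),
        (∀ i, 0 ≤ c₀ i) ∧ (∀ i, 0 ≤ c₁ i) ∧ (∀ i, 0 ≤ v i) ∧
        (∑ i, v i = 1) ∧ (∑ i, (c₀ i) ^ 2 = 1) ∧ (∑ i, (c₁ i) ^ 2 = 1) ∧
        (∀ i, if B i then
            (c₀ i) ^ 2 * p₀ = v i * q₁ ∧ (c₁ i) ^ 2 * p₁ = v i * q₀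
          else
            (c₀ i) ^ 2 * p₀ = v i * q₀ ∧ (c₁ i) ^ 2 * p₁ = v i * q₁)) ↔
      2 * min q₀ q₁ ≤ 2 * min p₀ p₁ :=
  z2_deterministic_transformation_general p₀ p₁ q₀ q₁ hp hq₀ hq₁ hq
end

section
/- Maximum conversion probability under the Z₂-SSR: Let (p₀,p₁) and (q₀,q₁) be standard-form weight pairs of Z₂-noninvariant pure states with min(p₀,p₁) < min(q₀,q₁). Then the set of achievable conversion probabilities { λ : ℝ | there exist a finite index set and, for each index i, a bit B_i ∈ {0,1}, nonnegative coefficients c₀_i, c₁_i with ∑_i (c₀_i)² ≤ 1 and ∑_i (c₁_i)² ≤ 1, and v_i ≥ 0 such that for each i: if B_i = 0 then (c₀_i)²·p₀ = v_i·q₀ and (c₁_i)²·p₁ = v_i·q₁, while if B_i = 1 then (c₀_i)²·p₀ = v_i·q₁ and (c₁_i)²·p₁ = v_i·q₀; and λ = ∑_i v_i } has greatest element min(p₀,p₁)/min(q₀,q₁) = C(p₀,p₁)/C(q₀,q₁). -/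
/-!
Each Kraus operator of the family feeds both source components into target components of
weight at least `min q₀ q₁`, so `vᵢ · min q₀ q₁ ≤ (c_bᵢ)² p_b` for `b = 0, 1`; summing over `i`
with `∑ᵢ (c_bᵢ)² ≤ 1` gives `λ · min q₀ q₁ ≤ min p₀ p₁`. Conversely, a single Kraus operator
sending the smaller source component onto the smaller target component with coefficient `1`
achieves `λ = min p₀ p₁ / min q₀ q₁`; its other coefficient is at most `1` precisely because
`min p₀ p₁ ≤ min q₀ q₁`.
-/

namespace Z2SSR

def achievableProbabilities (p₀ p₁ q₀ q₁ : ℝ) : Set ℝ :=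
  {lam : ℝ | ∃ (n : ℕ) (B : Fin n → Bool) (c₀ c₁ v : Fin n → ℝ),
    (∀ i, 0 ≤ c₀ i) ∧ (∀ i, 0 ≤ c₁ i) ∧ (∀ i, 0 ≤ v i) ∧
    (∑ i, (c₀ i) ^ 2 ≤ 1) ∧ (∑ i, (c₁ i) ^ 2 ≤ 1) ∧
    (∀ i, if B i then
        (c₀ i) ^ 2 * p₀ = v i * q₁ ∧ (c₁ i) ^ 2 * p₁ = v i * q₀
      else
        (c₀ i) ^ 2 * p₀ = v i * q₀ ∧ (c₁ i) ^ 2 * p₁ = v i * q₁) ∧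
    lam = ∑ i, v i}

section Symmetry

variable {p₀ p₁ q₀ q₁ : ℝ}

lemma achievableProbabilities_swap_target_subset :
    achievableProbabilities p₀ p₁ q₁ q₀ ⊆ achievableProbabilities p₀ p₁ q₀ q₁ := by
  rintro lam ⟨n, B, c₀, c₁, v, hc₀, hc₁, hv, hs₀, hs₁, hB, rfl⟩
  refine ⟨n, fun i => !B i, c₀, c₁, v, hc₀, hc₁, hv, hs₀, hs₁, fun i => ?_, rfl⟩
  specialize hB i
  cases B i <;> simpa using hB

lemma achievableProbabilities_swap_source_subset :
    achievableProbabilities p₁ p₀ q₀ q₁ ⊆ achievableProbabilities p₀ p₁ q₀ q₁ := by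
  rintro lam ⟨n, B, c₀, c₁, v, hc₀, hc₁, hv, hs₀, hs₁, hB, rfl⟩
  refine ⟨n, fun i => !B i, c₁, c₀, v, hc₁, hc₀, hv, hs₁, hs₀, fun i => ?_, rfl⟩
  specialize hB i
  cases B i <;> simpa [and_comm] using hB

lemma achievableProbabilities_swap_target :
    achievableProbabilities p₀ p₁ q₁ q₀ = achievableProbabilities p₀ p₁ q₀ q₁ :=
  achievableProbabilities_swap_target_subset.antisymm achievableProbabilities_swap_target_subset

lemma achievableProbabilities_swap_source :
    achievableProbabilities p₁ p₀ q₀ q₁ = achievableProbabilities p₀ p₁ q₀ q₁ :=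
  achievableProbabilities_swap_source_subset.antisymm achievableProbabilities_swap_source_subset

end Symmetry

lemma mul_min_le_of_kraus {p₀ p₁ q₀ q₁ a₀ a₁ v : ℝ} {b : Bool} (hv : 0 ≤ v)
    (h : if b then a₀ * p₀ = v * q₁ ∧ a₁ * p₁ = v * q₀
      else a₀ * p₀ = v * q₀ ∧ a₁ * p₁ = v * q₁) :
    v * min q₀ q₁ ≤ a₀ * p₀ ∧ v * min q₀ q₁ ≤ a₁ * p₁ := by
  cases b
  · obtain ⟨h₀, h₁⟩ := h
    rw [h₀, h₁]
    exact ⟨by gcongr; exact min_le_left _ _, by gcongr; exact min_le_right _ _⟩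
  · obtain ⟨h₀, h₁⟩ := h
    rw [h₀, h₁]
    exact ⟨by gcongr; exact min_le_right _ _, by gcongr; exact min_le_left _ _⟩

lemma sum_mul_le_of_forall_mul_le {ι : Type*} {s : Finset ι} {v a : ι → ℝ} {m p : ℝ}
    (hp : 0 ≤ p) (ha : ∑ i ∈ s, a i ≤ 1) (h : ∀ i ∈ s, v i * m ≤ a i * p) :
    (∑ i ∈ s, v i) * m ≤ p :=
  calc (∑ i ∈ s, v i) * m = ∑ i ∈ s, v i * m := Finset.sum_mul _ _ _
    _ ≤ ∑ i ∈ s, a i * p := Finset.sum_le_sum h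
    _ = (∑ i ∈ s, a i) * p := (Finset.sum_mul _ _ _).symm
    _ ≤ p := mul_le_of_le_one_left hp ha

lemma mul_min_le_min_of_mem_achievableProbabilities {p₀ p₁ q₀ q₁ lam : ℝ}
    (hp₀ : 0 ≤ p₀) (hp₁ : 0 ≤ p₁) (hlam : lam ∈ achievableProbabilities p₀ p₁ q₀ q₁) :
    lam * min q₀ q₁ ≤ min p₀ p₁ := by
  obtain ⟨n, B, c₀, c₁, v, -, -, hv, hs₀, hs₁, hB, rfl⟩ := hlam
  have hkraus i := mul_min_le_of_kraus (hv i) (hB i)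
  exact le_min (sum_mul_le_of_forall_mul_le hp₀ hs₀ fun i _ => (hkraus i).1)
    (sum_mul_le_of_forall_mul_le hp₁ hs₁ fun i _ => (hkraus i).2)

lemma mem_achievableProbabilities_of_mul_le {p₀ p₁ q₀ q₁ v : ℝ}
    (hp₀ : 0 < p₀) (hp₁ : 0 < p₁) (hq₀ : 0 ≤ q₀) (hq₁ : 0 ≤ q₁) (hv : 0 ≤ v)
    (h₀ : v * q₀ ≤ p₀) (h₁ : v * q₁ ≤ p₁) :
    v ∈ achievableProbabilities p₀ p₁ q₀ q₁ := by
  have hc (p q : ℝ) (hp : 0 < p) (hq : 0 ≤ q) (hle : v * q ≤ p) :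
      √(v * q / p) ^ 2 ≤ 1 ∧ √(v * q / p) ^ 2 * p = v * q := by
    rw [Real.sq_sqrt (by positivity)]
    exact ⟨(div_le_one hp).2 hle, div_mul_cancel₀ _ hp.ne'⟩
  obtain ⟨hs₀, he₀⟩ := hc p₀ q₀ hp₀ hq₀ h₀
  obtain ⟨hs₁, he₁⟩ := hc p₁ q₁ hp₁ hq₁ h₁
  refine ⟨1, fun _ => false, fun _ => √(v * q₀ / p₀), fun _ => √(v * q₁ / p₁), fun _ => v,
    fun _ => Real.sqrt_nonneg _, fun _ => Real.sqrt_nonneg _, fun _ => hv, ?_, ?_,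
    fun _ => ⟨he₀, he₁⟩, (Fin.sum_univ_one fun _ => v).symm⟩ <;> simpa only [Fin.sum_univ_one]

lemma div_mul_le_of_le {a b c d : ℝ} (hab : a + b = 1) (hcd : c + d = 1) (hc : 0 < c)
    (h : a ≤ c) : a / c * d ≤ b := by
  rw [div_mul_eq_mul_div, div_le_iff₀ hc]
  nlinarith

lemma div_mem_achievableProbabilities {p₀ p₁ q₀ q₁ : ℝ}
    (hp₀ : 0 < p₀) (hp₁ : 0 < p₁) (hp : p₀ + p₁ = 1)
    (hq₀ : 0 < q₀) (hq₁ : 0 < q₁) (hq : q₀ + q₁ = 1) (h : p₀ ≤ q₀) :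
    p₀ / q₀ ∈ achievableProbabilities p₀ p₁ q₀ q₁ :=
  mem_achievableProbabilities_of_mul_le hp₀ hp₁ hq₀.le hq₁.le (by positivity)
    (div_mul_cancel₀ _ hq₀.ne').le (div_mul_le_of_le hp hq hq₀ h)

end Z2SSR

open Z2SSR in
/-- **Maximum conversion probability under the Z₂-SSR.**
If `min(p₀,p₁) < min(q₀,q₁)`, the set of probabilities achievable by
trace-nonincreasing Z₂-invariant Kraus families transforming the state with weights
`(p₀,p₁)` into the state with weights `(q₀,q₁)` has greatest element
`min(p₀,p₁)/min(q₀,q₁) = C(p₀,p₁)/C(q₀,q₁)`. -/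
theorem z2_max_probability
    (p₀ p₁ q₀ q₁ : ℝ)
    (hp₀ : 0 < p₀) (hp₁ : 0 < p₁) (hp : p₀ + p₁ = 1)
    (hq₀ : 0 < q₀) (hq₁ : 0 < q₁) (hq : q₀ + q₁ = 1)
    (hlt : min p₀ p₁ < min q₀ q₁) :
    IsGreatest
      {lam : ℝ | ∃ (n : ℕ) (B : Fin n → Bool) (c₀ c₁ v : Fin n → ℝ),
        (∀ i, 0 ≤ c₀ i) ∧ (∀ i, 0 ≤ c₁ i) ∧ (∀ i, 0 ≤ v i) ∧
        (∑ i, (c₀ i) ^ 2 ≤ 1) ∧ (∑ i, (c₁ i) ^ 2 ≤ 1) ∧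
        (∀ i, if B i then
            (c₀ i) ^ 2 * p₀ = v i * q₁ ∧ (c₁ i) ^ 2 * p₁ = v i * q₀
          else
            (c₀ i) ^ 2 * p₀ = v i * q₀ ∧ (c₁ i) ^ 2 * p₁ = v i * q₁) ∧
        lam = ∑ i, v i}
      (min p₀ p₁ / min q₀ q₁) := by
  change IsGreatest (achievableProbabilities p₀ p₁ q₀ q₁) _
  refine ⟨?_, fun lam hlam => (le_div_iff₀ (lt_min hq₀ hq₁)).2
    (mul_min_le_min_of_mem_achievableProbabilities hp₀.le hp₁.le hlam)⟩
  have hp' : p₁ + p₀ = 1 := by linarith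
  have hq' : q₁ + q₀ = 1 := by linarith
  rcases le_total p₀ p₁ with hP | hP <;> rcases le_total q₀ q₁ with hQ | hQ <;>
    simp only [min_eq_left, min_eq_right, hP, hQ] at hlt ⊢
  · exact div_mem_achievableProbabilities hp₀ hp₁ hp hq₀ hq₁ hq hlt.le
  · rw [← achievableProbabilities_swap_target]
    exact div_mem_achievableProbabilities hp₀ hp₁ hp hq₁ hq₀ hq' hlt.le
  · rw [← achievableProbabilities_swap_source]
    exact div_mem_achievableProbabilities hp₁ hp₀ hp' hq₀ hq₁ hq hlt.le
  · rw [← achievableProbabilities_swap_source, ← achievableProbabilities_swap_target]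
    exact div_mem_achievableProbabilities hp₁ hp₀ hp' hq₁ hq₀ hq' hlt.le
end

section
/- Characterization of ensemble Z₂-frameness monotones: Let f : ℝ → ℝ. The following are equivalent. (i) For every x ∈ [0,1], every n : ℕ, every w : Fin n → ℝ with w i ≥ 0 for all i and ∑ i, w i = 1, and every y : Fin n → ℝ with y i ∈ [0,1] for all i and ∑ i, w i · y i ≤ x, one has ∑ i, w i · f (y i) ≤ f x. (ii) f is monotone nondecreasing on the interval [0,1] (MonotoneOn f (Set.Icc 0 1)) and concave on [0,1] (ConcaveOn ℝ (Set.Icc 0 1) f). -/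
/-!
Jensen's inequality bounds the ensemble average of `f` by `f` of the mean, and monotonicity
carries that up to `f x`. Conversely, one-point ensembles force monotonicity and two-point
ensembles with mean exactly `x` force concavity.
-/

theorem ConcaveOn.sum_smul_le_of_sum_smul_le {𝕜 E β ι : Type*} [Field 𝕜] [LinearOrder 𝕜]
    [IsStrictOrderedRing 𝕜] [AddCommGroup E] [PartialOrder E] [AddCommGroup β] [PartialOrder β]
    [IsOrderedAddMonoid β] [Module 𝕜 E] [Module 𝕜 β] [IsStrictOrderedModule 𝕜 β]
    {s : Set E} {f : E → β} {t : Finset ι} {w : ι → 𝕜} {p : ι → E} {x : E}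
    (hf : ConcaveOn 𝕜 s f) (hmono : MonotoneOn f s) (h₀ : ∀ i ∈ t, 0 ≤ w i)
    (h₁ : ∑ i ∈ t, w i = 1) (hmem : ∀ i ∈ t, p i ∈ s) (hx : x ∈ s)
    (hle : ∑ i ∈ t, w i • p i ≤ x) :
    ∑ i ∈ t, w i • f (p i) ≤ f x :=
  (hf.le_map_sum h₀ h₁ hmem).trans (hmono (hf.1.sum_mem h₀ h₁ hmem) hx hle)

def IsEnsembleMonotoneOn (s : Set ℝ) (f : ℝ → ℝ) : Prop :=
  ∀ x ∈ s, ∀ (n : ℕ) (w y : Fin n → ℝ), (∀ i, 0 ≤ w i) → ∑ i, w i = 1 → (∀ i, y i ∈ s) →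
    ∑ i, w i * y i ≤ x → ∑ i, w i * f (y i) ≤ f x

namespace IsEnsembleMonotoneOn

variable {s : Set ℝ} {f : ℝ → ℝ}

theorem monotoneOn (h : IsEnsembleMonotoneOn s f) : MonotoneOn f s := by
  intro a ha b hb hab
  simpa using h b hb 1 1 (fun _ => a) (fun _ => zero_le_one) (by simp) (fun _ => ha)
    (by simpa using hab)

theorem concaveOn (h : IsEnsembleMonotoneOn s f) (hs : Convex ℝ s) : ConcaveOn ℝ s f := by
  refine ⟨hs, fun p hp q hq a b ha hb hab => ?_⟩
  have h₂ := h (a • p + b • q) (hs hp hq ha hb hab) 2 ![a, b] ![p, q]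
    (by simp [Fin.forall_fin_two, ha, hb]) (by simp [hab])
    (by simp [Fin.forall_fin_two, hp, hq]) (by simp)
  simpa [Fin.sum_univ_two] using h₂

end IsEnsembleMonotoneOn

theorem isEnsembleMonotoneOn_of_monotoneOn_of_concaveOn {s : Set ℝ} {f : ℝ → ℝ}
    (hmono : MonotoneOn f s) (hf : ConcaveOn ℝ s f) : IsEnsembleMonotoneOn s f := by
  intro x hx n w y h₀ h₁ hmem hle
  simpa only [smul_eq_mul] using hf.sum_smul_le_of_sum_smul_le hmono (fun i _ => h₀ i) h₁
    (fun i _ => hmem i) hx (by simpa only [smul_eq_mul] using hle)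

/-- **Characterization of ensemble Z₂-frameness monotones.**
A function `f` (applied to the frameness measure `C ∈ [0,1]`) is nonincreasing on
average under all Z₂-invariant pure-to-ensemble transformations iff `f` is
nondecreasing and concave on `[0,1]`. -/
theorem z2_ensemble_monotone_characterization (f : ℝ → ℝ) :
    (∀ x ∈ Set.Icc (0 : ℝ) 1, ∀ (n : ℕ) (w y : Fin n → ℝ),
        (∀ i, 0 ≤ w i) → (∑ i, w i = 1) →
        (∀ i, y i ∈ Set.Icc (0 : ℝ) 1) →
        (∑ i, w i * y i ≤ x) →
        ∑ i, w i * f (y i) ≤ f x) ↔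
      (MonotoneOn f (Set.Icc 0 1) ∧ ConcaveOn ℝ (Set.Icc 0 1) f) :=
  show IsEnsembleMonotoneOn (Set.Icc 0 1) f ↔ _ from
    ⟨fun h => ⟨h.monotoneOn, h.concaveOn (convex_Icc 0 1)⟩,
      fun ⟨hmono, hf⟩ => isEnsembleMonotoneOn_of_monotoneOn_of_concaveOn hmono hf⟩
end

section
/- Pure-to-ensemble transformations under the Z₂-SSR: Let (p₀,p₁) be a standard-form weight pair of a Z₂-noninvariant pure state. Let μ range over a finite index set, let w_μ ≥ 0 with ∑_μ w_μ = 1, and let (q₀_μ, q₁_μ) be weight pairs with q₀_μ, q₁_μ ≥ 0 and q₀_μ + q₁_μ = 1. If ∑_μ w_μ · min(q₀_μ, q₁_μ) ≤ min(p₀, p₁), then the ensemble transformation is achievable by a trace-preserving Z₂-invariant operation: there exist, for each μ and each β ∈ Bool, a bit B_{μ,β} ∈ {0,1}, nonnegative coefficients c₀_{μ,β}, c₁_{μ,β}, and v_{μ,β} ≥ 0, such that ∑_{μ,β} (c₀_{μ,β})² = 1, ∑_{μ,β} (c₁_{μ,β})² = 1, v_{μ,false} + v_{μ,true} = w_μ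 for every μ, and for each (μ,β): if B_{μ,β} = 0 then (c₀_{μ,β})²·p₀ = v_{μ,β}·q₀_μ and (c₁_{μ,β})²·p₁ = v_{μ,β}·q₁_μ, while if B_{μ,β} = 1 then (c₀_{μ,β})²·p₀ = v_{μ,β}·q₁_μ and (c₁_{μ,β})²·p₁ = v_{μ,β}·q₀_μ. -/
open Finset Set

/- The Kraus operators attached to outcome `μ` come in a pair: `β = false` keeps the parities
(`B = 0`) and carries the part `t μ` of the weight `w μ`, while `β = true` swaps them (`B = 1`) and
carries `w μ - t μ`. Their squared coefficients are then forced, and trace preservation reduces to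
`∑ μ, (t μ * q₀ μ + (w μ - t μ) * q₁ μ) = p₀`. As `t` ranges over the box `0 ≤ t ≤ w` this affine
sum fills the interval from `∑ w min(q₀, q₁)` to `∑ w max(q₀, q₁) = 1 - ∑ w min(q₀, q₁)`, which
contains `p₀` exactly by the frameness bound. -/

lemma sum_mul_min_add_sum_mul_max {ι : Type*} [Fintype ι] (w a b : ι → ℝ) :
    ∑ i, w i * min (a i) (b i) + ∑ i, w i * max (a i) (b i) = ∑ i, w i * (a i + b i) := by
  simp only [← sum_add_distrib, ← mul_add, min_add_max]

lemma exists_split_sum_eq_of_mem_Icc {ι : Type*} [Fintype ι] (w a b : ι → ℝ)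
    (hw : ∀ i, 0 ≤ w i) {x : ℝ}
    (hx : x ∈ Icc (∑ i, w i * min (a i) (b i)) (∑ i, w i * max (a i) (b i))) :
    ∃ t : ι → ℝ, (∀ i, 0 ≤ t i ∧ t i ≤ w i) ∧ ∑ i, (t i * a i + (w i - t i) * b i) = x := by
  obtain ⟨α, β, hα, hβ, hαβ, rfl⟩ := Icc_subset_segment (𝕜 := ℝ) hx
  -- `s` puts all of `w i` on the smaller of `a i`, `b i`, and `w - s` on the larger one.
  set s : ι → ℝ := fun i => if a i ≤ b i then w i else 0
  have hs : ∀ i, 0 ≤ s i ∧ s i ≤ w i := fun i => by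
    by_cases h : a i ≤ b i <;> simp [s, h, hw i]
  have hmin : ∀ i, s i * a i + (w i - s i) * b i = w i * min (a i) (b i) := fun i => by
    by_cases h : a i ≤ b i <;> simp [s, h, le_of_not_ge]
  have hmax : ∀ i, (w i - s i) * a i + (w i - (w i - s i)) * b i = w i * max (a i) (b i) :=
    fun i => by by_cases h : a i ≤ b i <;> simp [s, h, le_of_not_ge]
  refine ⟨fun i => α * s i + β * (w i - s i), fun i => ⟨?_, ?_⟩, ?_⟩
  · nlinarith [hs i]
  · nlinarith [hs i]
  · simp only [smul_eq_mul, mul_sum, ← hmin, ← hmax, ← sum_add_distrib]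
    refine sum_congr rfl fun i _ => ?_
    linear_combination -(w i * b i) * hαβ

lemma exists_nonneg_sq_mul_eq_of_sum_eq {ι : Type*} [Fintype ι] (x : ι → ℝ) (hx : ∀ i, 0 ≤ x i)
    {p : ℝ} (hp : 0 < p) (hsum : ∑ i, x i = p) :
    ∃ c : ι → ℝ, (∀ i, 0 ≤ c i) ∧ ∑ i, c i ^ 2 = 1 ∧ ∀ i, c i ^ 2 * p = x i := by
  have hsq : ∀ i, √(x i / p) ^ 2 = x i / p := fun i => Real.sq_sqrt (div_nonneg (hx i) hp.le)
  refine ⟨fun i => √(x i / p), fun i => Real.sqrt_nonneg _, ?_, fun i => ?_⟩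
  · rw [sum_congr rfl fun i _ => hsq i, ← sum_div, hsum, div_self hp.ne']
  · rw [hsq, div_mul_cancel₀ _ hp.ne']

/-- **Pure-to-ensemble transformations under the Z₂-SSR.**
If the average of the frameness measure over the target ensemble does not exceed
that of the source state, i.e. `∑ μ, w μ * min (q₀ μ) (q₁ μ) ≤ min p₀ p₁`, then the
ensemble transformation is achievable by a trace-preserving Z₂-invariant operation,
with two Kraus operators (indexed by `β : Bool`) assigned to each outcome `μ`. -/
theorem z2_pure_to_ensemble
    (p₀ p₁ : ℝ) (hp₀ : 0 < p₀) (hp₁ : 0 < p₁) (hp : p₀ + p₁ = 1)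
    (n : ℕ) (w : Fin n → ℝ) (hw : ∀ μ, 0 ≤ w μ) (hwsum : ∑ μ, w μ = 1)
    (q₀ q₁ : Fin n → ℝ) (hq₀ : ∀ μ, 0 ≤ q₀ μ) (hq₁ : ∀ μ, 0 ≤ q₁ μ)
    (hq : ∀ μ, q₀ μ + q₁ μ = 1)
    (hC : ∑ μ, w μ * min (q₀ μ) (q₁ μ) ≤ min p₀ p₁) :
    ∃ (B : Fin n → Bool → Bool) (c₀ c₁ v : Fin n → Bool → ℝ),
      (∀ μ β, 0 ≤ c₀ μ β) ∧ (∀ μ β, 0 ≤ c₁ μ β) ∧ (∀ μ β, 0 ≤ v μ β) ∧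
      (∑ μ, ∑ β, (c₀ μ β) ^ 2 = 1) ∧ (∑ μ, ∑ β, (c₁ μ β) ^ 2 = 1) ∧
      (∀ μ, v μ false + v μ true = w μ) ∧
      (∀ μ β, if B μ β then
          (c₀ μ β) ^ 2 * p₀ = v μ β * q₁ μ ∧ (c₁ μ β) ^ 2 * p₁ = v μ β * q₀ μ
        else
          (c₀ μ β) ^ 2 * p₀ = v μ β * q₀ μ ∧ (c₁ μ β) ^ 2 * p₁ = v μ β * q₁ μ) := by
  have hminmax := sum_mul_min_add_sum_mul_max w q₀ q₁
  simp only [hq, mul_one, hwsum] at hminmax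
  obtain ⟨t, ht, hsum₀⟩ := exists_split_sum_eq_of_mem_Icc w q₀ q₁ hw (x := p₀)
    ⟨hC.trans (min_le_left _ _), by linarith [hC.trans (min_le_right _ _)]⟩
  have hsum₁ : ∑ μ, (t μ * q₁ μ + (w μ - t μ) * q₀ μ) = p₁ := by
    rw [← sub_eq_of_eq_add' hp.symm, ← hwsum, ← hsum₀, ← sum_sub_distrib]
    exact sum_congr rfl fun μ _ => by linear_combination w μ * hq μ
  set v : Fin n → Bool → ℝ := fun μ β => bif β then w μ - t μ else t μ
  have hv : ∀ μ β, 0 ≤ v μ β := fun μ β => by cases β <;> simp [v, ht μ]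
  obtain ⟨c₀, hc₀, hc₀sum, hc₀eq⟩ := exists_nonneg_sq_mul_eq_of_sum_eq
    (fun μβ : Fin n × Bool => v μβ.1 μβ.2 * bif μβ.2 then q₁ μβ.1 else q₀ μβ.1)
    (fun ⟨μ, β⟩ => mul_nonneg (hv μ β) (by cases β <;> simp [hq₀ μ, hq₁ μ])) hp₀
    (by simpa [Fintype.sum_prod_type, v, add_comm] using hsum₀)
  obtain ⟨c₁, hc₁, hc₁sum, hc₁eq⟩ := exists_nonneg_sq_mul_eq_of_sum_eq
    (fun μβ : Fin n × Bool => v μβ.1 μβ.2 * bif μβ.2 then q₀ μβ.1 else q₁ μβ.1)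
    (fun ⟨μ, β⟩ => mul_nonneg (hv μ β) (by cases β <;> simp [hq₀ μ, hq₁ μ])) hp₁
    (by simpa [Fintype.sum_prod_type, v, add_comm] using hsum₁)
  refine ⟨fun _ β => β, fun μ β => c₀ (μ, β), fun μ β => c₁ (μ, β), v,
    fun μ β => hc₀ _, fun μ β => hc₁ _, hv, ?_, ?_, fun μ => by simp [v], fun μ β => ?_⟩
  · rwa [← Fintype.sum_prod_type']
  · rwa [← Fintype.sum_prod_type']
  · cases β <;> simp [hc₀eq, hc₁eq]
end

section
/- Deterministic single-copy transformations under the SU(2)-SSR on ℋ_n̂: Let p, q : ℕ → ℝ be standard-form weight distributions on ℋ_n̂. The following are equivalent. (i) There exist downward shifts J : ℕ → ℕ, nonnegative coefficient functions c : ℕ → ℕ → ℝ with c μ j = 0 whenever j < J μ, and nonnegative weights w : ℕ → ℝ with ∑' μ, w μ = 1, such that ∑' μ, (c μ j)² = 1 for every j with p j ≠ 0, and (c μ (j + J μ))² · p (j + J μ) = w μ · q j for every μ ∈ ℕ and every j ∈ ℕ (i.e., the transformation is achieved by a trace-preserving SU(2)-invariant Kraus family, each Kraus operator mapping the input pure state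 to √(w μ) times the target). (ii) p is a convex combination of downward shifts of q: there exists v : ℕ → ℝ with v J ≥ 0 for all J, ∑' J, v J = 1, and p j = ∑_{J = 0}^{j} v J · q (j − J) for every j ∈ ℕ. -/
/-!
A Kraus family `(J μ, c μ)` with weights `w μ` realises `p ↦ q` exactly when `p` is the mixture
of the shifts of `q` by `J μ` with weights `w μ`: the Kraus relation at `j - J μ` says that the
`μ`-th operator sends the share `(c μ j)² p j` of `p j` to `w μ q (j - J μ)`, and trace
preservation says these shares add up to `p j`. Grouping the operators by their shift turns the
mixture into one over shifts, with weights `v J = ∑_{J μ = J} w μ`. Conversely, given `v`, one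
operator per shift `J` with `(c J j)² = v J q (j - J) / p j` does the job.
-/

open Finset

lemma tsum_ite_le_eq_sum_range {M : Type*} [AddCommMonoid M] [TopologicalSpace M]
    (f : ℕ → M) (j : ℕ) :
    ∑' μ, (if μ ≤ j then f μ else 0) = ∑ μ ∈ range (j + 1), f μ := by
  rw [tsum_eq_sum (s := range (j + 1)) fun μ hμ => if_neg (by simpa [Nat.lt_succ_iff] using hμ)]
  exact sum_congr rfl fun μ hμ => if_pos (Nat.lt_succ_iff.mp (mem_range.mp hμ))

lemma sum_tsum_fiber_mul_eq_tsum {ι κ : Type*} [DecidableEq κ] {w : ι → ℝ} (hw : Summable w)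
    (J : ι → κ) (s : Finset κ) (f : κ → ℝ) :
    ∑ K ∈ s, (∑' μ : J ⁻¹' {K}, w μ) * f K = ∑' μ, if J μ ∈ s then w μ * f (J μ) else 0 := by
  calc ∑ K ∈ s, (∑' μ : J ⁻¹' {K}, w μ) * f K
      = ∑ K ∈ s, ∑' μ, (J ⁻¹' {K}).indicator w μ * f K := by
        simp only [_root_.tsum_subtype, tsum_mul_right]
    _ = ∑' μ, ∑ K ∈ s, (J ⁻¹' {K}).indicator w μ * f K :=
        (Summable.tsum_finsetSum fun K _ => (hw.indicator _).mul_right _).symm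
    _ = ∑' μ, if J μ ∈ s then w μ * f (J μ) else 0 := by
        classical
        refine tsum_congr fun μ => ?_
        simp only [Set.indicator_apply, Set.mem_preimage, Set.mem_singleton_iff, ite_mul,
          zero_mul]
        convert sum_ite_eq s (J μ) fun K => w μ * f K

lemma ite_le_eq_sq_mul_of_kraus {J j : ℕ} {c p q : ℕ → ℝ} {w : ℝ}
    (hcJ : ∀ i, i < J → c i = 0) (hkraus : ∀ i, c (i + J) ^ 2 * p (i + J) = w * q i) :
    (if J ≤ j then w * q (j - J) else 0) = c j ^ 2 * p j := by
  split_ifs with hJ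
  · rw [← hkraus, Nat.sub_add_cancel hJ]
  · simp [hcJ j (not_le.mp hJ)]

lemma sq_sqrt_div_sum_mul_sum {ι : Type*} {s : Finset ι} {t : ι → ℝ} (ht : ∀ i ∈ s, 0 ≤ t i)
    {i : ι} (hi : i ∈ s) :
    √(t i / ∑ k ∈ s, t k) ^ 2 * ∑ k ∈ s, t k = t i := by
  by_cases hsum : ∑ k ∈ s, t k = 0
  · simp [hsum, (sum_eq_zero_iff_of_nonneg ht).mp hsum i hi]
  · rw [Real.sq_sqrt (div_nonneg (ht i hi) (sum_nonneg ht)), div_mul_cancel₀ _ hsum]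

noncomputable def shiftKrausCoeff (v q p : ℕ → ℝ) (μ j : ℕ) : ℝ :=
  if μ ≤ j then √(v μ * q (j - μ) / p j) else 0

lemma shiftKrausCoeff_sq_mul {v q p : ℕ → ℝ} (hv0 : ∀ μ, 0 ≤ v μ) (hq0 : ∀ j, 0 ≤ q j)
    (hvp : ∀ j, p j = ∑ μ ∈ range (j + 1), v μ * q (j - μ)) (μ j : ℕ) :
    shiftKrausCoeff v q p μ j ^ 2 * p j = if μ ≤ j then v μ * q (j - μ) else 0 := by
  unfold shiftKrausCoeff
  split_ifs with hμ
  · rw [hvp j]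
    exact sq_sqrt_div_sum_mul_sum (fun i _ => mul_nonneg (hv0 i) (hq0 _))
      (mem_range.mpr (Nat.lt_succ_of_le hμ))
  · simp

theorem su2_deterministic_transformation_general
    (p q : ℕ → ℝ)
    (hq0 : ∀ j, 0 ≤ q j) :
    (∃ (J : ℕ → ℕ) (c : ℕ → ℕ → ℝ) (w : ℕ → ℝ),
        (∀ μ j, 0 ≤ c μ j) ∧ (∀ μ j, j < J μ → c μ j = 0) ∧
        (∀ μ, 0 ≤ w μ) ∧ (∑' μ, w μ = 1) ∧
        (∀ j, p j ≠ 0 → ∑' μ, (c μ j) ^ 2 = 1) ∧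
        (∀ μ j, (c μ (j + J μ)) ^ 2 * p (j + J μ) = w μ * q j)) ↔
      (∃ v : ℕ → ℝ, (∀ J, 0 ≤ v J) ∧ (∑' J, v J = 1) ∧
        ∀ j, p j = ∑ J ∈ Finset.range (j + 1), v J * q (j - J)) := by
  constructor
  · rintro ⟨J, c, w, -, hcJ, hw0, hwsum, htp, hkraus⟩
    have hw : HasSum w 1 := by
      have : Summable w := by
        by_contra h
        simp [tsum_eq_zero_of_not_summable h] at hwsum
      exact hwsum ▸ this.hasSum
    refine ⟨fun K => ∑' μ : J ⁻¹' {K}, w μ, fun K => tsum_nonneg fun μ => hw0 μ,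
      (hw.tsum_fiberwise J).tsum_eq, fun j => ?_⟩
    simp only [sum_tsum_fiber_mul_eq_tsum hw.summable, mem_range, Nat.lt_succ_iff,
      ite_le_eq_sq_mul_of_kraus (hcJ _) (hkraus _), tsum_mul_right]
    by_cases hpj : p j = 0
    · simp [hpj]
    · rw [htp j hpj, one_mul]
  · rintro ⟨v, hv0, hvsum, hvp⟩
    have hshare := shiftKrausCoeff_sq_mul hv0 hq0 hvp
    refine ⟨id, shiftKrausCoeff v q p, v, fun μ j => ?_, fun μ j hj => if_neg (not_le.mpr hj),
      hv0, hvsum, fun j hpj => ?_, fun μ j => by simp [hshare]⟩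
    · unfold shiftKrausCoeff; split_ifs <;> positivity
    · rw [← mul_eq_right₀ hpj, ← tsum_mul_right]
      simp only [hshare, tsum_ite_le_eq_sum_range, ← hvp j]

/-- **Deterministic single-copy transformations under the SU(2)-SSR on ℋ_n̂.**
(Here `j : ℕ` indexes twice the angular momentum quantum number.) A trace-preserving
SU(2)-invariant Kraus family (each operator a downward shift `J μ` composed with a
diagonal coefficient operator) maps the pure state with weights `p` to the one with
weights `q` iff `p` is a convex combination of downward shifts of `q`. -/
theorem su2_deterministic_transformation
    (p q : ℕ → ℝ)
    (hp0 : ∀ j, 0 ≤ p j) (hpfin : (Function.support p).Finite) (hpsum : ∑' j, p j = 1)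
    (hq0 : ∀ j, 0 ≤ q j) (hqfin : (Function.support q).Finite) (hqsum : ∑' j, q j = 1) :
    (∃ (J : ℕ → ℕ) (c : ℕ → ℕ → ℝ) (w : ℕ → ℝ),
        (∀ μ j, 0 ≤ c μ j) ∧ (∀ μ j, j < J μ → c μ j = 0) ∧
        (∀ μ, 0 ≤ w μ) ∧ (∑' μ, w μ = 1) ∧
        (∀ j, p j ≠ 0 → ∑' μ, (c μ j) ^ 2 = 1) ∧
        (∀ μ j, (c μ (j + J μ)) ^ 2 * p (j + J μ) = w μ * q j)) ↔
      (∃ v : ℕ → ℝ, (∀ J, 0 ≤ v J) ∧ (∑' J, v J = 1) ∧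
        ∀ j, p j = ∑ J ∈ Finset.range (j + 1), v J * q (j - J)) :=
  su2_deterministic_transformation_general p q hq0
end

section
/- Stochastic single-copy transformations under the SU(2)-SSR on ℋ_n̂: Let p, q : ℕ → ℝ be standard-form weight distributions on ℋ_n̂. The following are equivalent. (i) There exist J ∈ ℕ, λ > 0, and c : ℕ → ℝ with 0 ≤ c j ≤ 1 for all j and c j = 0 for j < J, such that (c (j + J))² · p (j + J) = λ · q j for every j ∈ ℕ (i.e., some single SU(2)-invariant Kraus operator maps the pure state with weights p to √λ times the pure state with weights q). (ii) There exists J ∈ ℕ such that for every j ∈ ℕ, q j ≠ 0 implies p (j + J) ≠ 0 (the j-spectrum of q is contained in the j-spectrum of p shifted down by J). -/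
/-!
A single Kraus operator with shift `J` can only lower weights, so the spectrum of `q` must sit
inside that of `p` shifted by `J`. Conversely, since `q` has finite support, some `λ > 0` makes
`λ q j ≤ p (j + J)` for every `j`, and then `c (j + J) = √(λ q j / p (j + J))` is a valid
coefficient function.
-/

open Filter Topology

lemma exists_pos_mul_le_of_support_finite {α : Type*} {f g : α → ℝ} (hf : ∀ x, 0 ≤ f x)
    (hg : g.support.Finite) (hfg : ∀ x, g x ≠ 0 → 0 < f x) :
    ∃ ε > 0, ∀ x, ε * g x ≤ f x := by
  have hsmall : ∀ᶠ ε in 𝓝[>] (0 : ℝ), ∀ x ∈ g.support, ε * g x ≤ f x := by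
    refine hg.eventually_all.2 fun x hx => ?_
    have hlim : Tendsto (fun ε : ℝ => ε * g x) (𝓝[>] 0) (𝓝 0) :=
      ((continuous_mul_const (g x)).tendsto' 0 0 (zero_mul _)).mono_left nhdsWithin_le_nhds
    exact (hlim.eventually_lt_const (hfg x hx)).mono fun _ h => h.le
  obtain ⟨ε, hε, hεpos⟩ := (hsmall.and self_mem_nhdsWithin).exists
  refine ⟨ε, hεpos, fun x => ?_⟩
  by_cases hx : g x = 0
  · simpa [hx] using hf x
  · exact hε x hx

lemma exists_shift_coeff_of_mul_le {p q : ℕ → ℝ} {J : ℕ} {lam : ℝ} (hlam : 0 ≤ lam)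
    (hq0 : ∀ j, 0 ≤ q j) (hle : ∀ j, lam * q j ≤ p (j + J)) :
    ∃ c : ℕ → ℝ, (∀ j, 0 ≤ c j ∧ c j ≤ 1) ∧ (∀ j, j < J → c j = 0) ∧
      ∀ j, c (j + J) ^ 2 * p (j + J) = lam * q j := by
  have hlq : ∀ j, 0 ≤ lam * q j := fun j => mul_nonneg hlam (hq0 j)
  -- where `p j = 0` the quotient is `0` by Lean's convention, which is what we want
  refine ⟨fun j => if J ≤ j then √(lam * q (j - J) / p j) else 0, fun j => ?_,
    fun j hj => if_neg (not_le.2 hj), fun j => ?_⟩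
  · dsimp only
    split_ifs with hj
    · refine ⟨Real.sqrt_nonneg _, Real.sqrt_le_one.2 (div_le_one_of_le₀ ?_ ?_)⟩
      · simpa [Nat.sub_add_cancel hj] using hle (j - J)
      · simpa [Nat.sub_add_cancel hj] using (hlq (j - J)).trans (hle (j - J))
    · exact ⟨le_rfl, zero_le_one⟩
  · simp only [le_add_iff_nonneg_left, zero_le, if_true, Nat.add_sub_cancel]
    rw [Real.sq_sqrt (div_nonneg (hlq j) ((hlq j).trans (hle j)))]
    by_cases hp : p (j + J) = 0
    · simp [hp, le_antisymm (hp ▸ hle j) (hlq j)]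
    · exact div_mul_cancel₀ _ hp

theorem su2_stochastic_transformation_general
    (p q : ℕ → ℝ)
    (hp0 : ∀ j, 0 ≤ p j)
    (hq0 : ∀ j, 0 ≤ q j) (hqfin : (Function.support q).Finite) :
    (∃ (J : ℕ) (lam : ℝ) (c : ℕ → ℝ),
        0 < lam ∧ (∀ j, 0 ≤ c j ∧ c j ≤ 1) ∧ (∀ j, j < J → c j = 0) ∧
        (∀ j, (c (j + J)) ^ 2 * p (j + J) = lam * q j)) ↔
      (∃ J : ℕ, ∀ j, q j ≠ 0 → p (j + J) ≠ 0) := by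
  constructor
  · rintro ⟨J, lam, c, hlam, -, -, heq⟩
    refine ⟨J, fun j hqj hpj => hqj ?_⟩
    have h := heq j
    rw [hpj, mul_zero] at h
    exact (mul_eq_zero.1 h.symm).resolve_left hlam.ne'
  · rintro ⟨J, hsupp⟩
    obtain ⟨lam, hlam, hle⟩ := exists_pos_mul_le_of_support_finite (f := fun j => p (j + J))
      (fun _ => hp0 _) hqfin fun j hj => (hp0 _).lt_of_ne' (hsupp j hj)
    obtain ⟨c, hc⟩ := exists_shift_coeff_of_mul_le hlam.le hq0 hle
    exact ⟨J, lam, c, hlam, hc⟩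

/-- **Stochastic single-copy transformations under the SU(2)-SSR on ℋ_n̂.**
(Here `j : ℕ` indexes twice the angular momentum quantum number.) A single
SU(2)-invariant Kraus operator maps the pure state with weights `p` to `√λ` times
the one with weights `q` (for some `λ > 0`) iff the j-spectrum of `q` equals a
subset of the j-spectrum of `p` shifted down by some `J`. -/
theorem su2_stochastic_transformation
    (p q : ℕ → ℝ)
    (hp0 : ∀ j, 0 ≤ p j) (hpfin : (Function.support p).Finite) (hpsum : ∑' j, p j = 1)
    (hq0 : ∀ j, 0 ≤ q j) (hqfin : (Function.support q).Finite) (hqsum : ∑' j, q j = 1) :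
    (∃ (J : ℕ) (lam : ℝ) (c : ℕ → ℝ),
        0 < lam ∧ (∀ j, 0 ≤ c j ∧ c j ≤ 1) ∧ (∀ j, j < J → c j = 0) ∧
        (∀ j, (c (j + J)) ^ 2 * p (j + J) = lam * q j)) ↔
      (∃ J : ℕ, ∀ j, q j ≠ 0 → p (j + J) ≠ 0) :=
  su2_stochastic_transformation_general p q hp0 hq0 hqfin
end

section
/- The number variance is an ensemble U(1)-frameness monotone: Let p : ℤ → ℝ be a standard-form weight distribution. For a finitely supported r : ℤ → ℝ define the mean m(r) = ∑' n, (n : ℝ) · r n and the variance Var(r) = ∑' n, (n : ℝ)² · r n − (m(r))². Let (k_μ, c_μ)_{μ ∈ ℕ} be a trace-preserving U(1)-invariant Kraus family: c μ n ≥ 0 and ∑' μ, (c μ n)² = 1 for every n ∈ ℤ. Set w μ := ∑' n, (c μ n)² · p n, and for each μ with w μ > 0 define the posterior weight distribution q_μ : ℤ → ℝ by q_μ m = (c μ (m − k μ))² · p (m − k μ) / (w μ). Then ∑' μ, w μ · Var(q_μ) ≤ Var(p), where terms with w μ = 0 contribute 0. -/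
/-- The mean of the number distribution `r : ℤ → ℝ`. -/
noncomputable def numberMean (r : ℤ → ℝ) : ℝ := ∑' n : ℤ, (n : ℝ) * r n

/-- The variance of the number distribution `r : ℤ → ℝ`. -/
noncomputable def numberVar (r : ℤ → ℝ) : ℝ :=
  (∑' n : ℤ, (n : ℝ) ^ 2 * r n) - (numberMean r) ^ 2

/-!
Writing `r_μ n = (c μ n)² p n`, the outcome-`μ` term is `w_μ Var(q_μ)`, and since the variance
is the least second moment about any point, it is at most `∑ n, (n - a)² r_μ n` for every `a`
(the shift `k μ` only moves the optimal point). Taking `a` to be the mean of `p` for all `μ` and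
summing, trace preservation `∑ μ, r_μ n = p n` turns the bound into `∑ n, (n - a)² p n = Var(p)`.
-/

open Function

theorem tsum_sub_sq_mul_eq_numberVar_add {q : ℤ → ℝ} (hq : (support q).Finite)
    (hsum : ∑' n, q n = 1) (a : ℝ) :
    ∑' n : ℤ, ((n : ℝ) - a) ^ 2 * q n = numberVar q + (numberMean q - a) ^ 2 := by
  have hs : ∀ g : ℤ → ℝ, Summable fun n => g n * q n := fun g =>
    summable_of_hasFiniteSupport (hq.subset (support_mul_subset_right _ _))
  have hexpand : ∀ n : ℤ, ((n : ℝ) - a) ^ 2 * q n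
      = ((n : ℝ) ^ 2 * q n - 2 * a * ((n : ℝ) * q n)) + a ^ 2 * q n := fun n => by ring
  rw [tsum_congr hexpand, ((hs _).sub ((hs _).mul_left _)).tsum_add
    ((summable_of_hasFiniteSupport hq).mul_left _), (hs _).tsum_sub ((hs _).mul_left _),
    tsum_mul_left, tsum_mul_left, hsum, numberVar, numberMean]
  ring

theorem tsum_mul_numberVar_shift_le {r : ℤ → ℝ} (hr0 : ∀ n, 0 ≤ r n)
    (hr : (support r).Finite) (k : ℤ) (a : ℝ) :
    (∑' n, r n) * numberVar (fun m => r (m - k) / ∑' n, r n)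
      ≤ ∑' n : ℤ, ((n : ℝ) - a) ^ 2 * r n := by
  set W := ∑' n, r n
  have hW0 : 0 ≤ W := tsum_nonneg hr0
  rcases hW0.eq_or_lt with hW | hW
  · rw [← hW, zero_mul]
    exact tsum_nonneg fun n => mul_nonneg (sq_nonneg _) (hr0 n)
  have hshift : ∀ g : ℤ → ℝ, ∑' m : ℤ, g (m - k) = ∑' n, g n :=
    fun g => (Equiv.subRight k).tsum_eq g
  set q : ℤ → ℝ := fun m => r (m - k) / W
  have hq : (support q).Finite :=
    (hr.preimage (f := fun m => m - k) sub_left_injective.injOn).subset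
      fun m hm h => hm (by simp only [q, h, zero_div])
  have hqsum : ∑' m, q m = 1 := by
    rw [tsum_div_const, hshift r, div_self hW.ne']
  calc W * numberVar q ≤ W * ∑' m : ℤ, ((m : ℝ) - (a + k)) ^ 2 * q m := by
        rw [tsum_sub_sq_mul_eq_numberVar_add hq hqsum]
        gcongr
        exact le_add_of_nonneg_right (sq_nonneg _)
    _ = ∑' n : ℤ, ((n : ℝ) - a) ^ 2 * r n := by
        rw [← tsum_mul_left, ← hshift fun n => ((n : ℝ) - a) ^ 2 * r n]
        refine tsum_congr fun m => ?_
        simp only [q, Int.cast_sub]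
        field_simp
        ring

theorem hasSum_tsum_sq_mul_of_tsum_sq_eq_one {ι α : Type*} {c : ι → α → ℝ}
    (htp : ∀ n, ∑' μ, c μ n ^ 2 = 1) {g : α → ℝ} (hg : (support g).Finite) :
    HasSum (fun μ => ∑' n, c μ n ^ 2 * g n) (∑' n, g n) := by
  have hc : ∀ n, HasSum (fun μ => c μ n ^ 2) 1 := fun n => by
    have hs : Summable fun μ => c μ n ^ 2 := by
      by_contra h
      simpa [tsum_eq_zero_of_not_summable h] using htp n
    simpa [htp n] using hs.hasSum
  have hF : ∀ n ∉ hg.toFinset, g n = 0 := by simp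
  have hfin : (fun μ => ∑' n, c μ n ^ 2 * g n) = fun μ => ∑ n ∈ hg.toFinset, c μ n ^ 2 * g n :=
    funext fun μ => tsum_eq_sum fun n hn => by rw [hF n hn, mul_zero]
  have h := hasSum_sum (s := hg.toFinset) fun n _ => (hc n).mul_right (g n)
  simp only [one_mul] at h
  rwa [hfin, tsum_eq_sum hF]

theorem u1_variance_ensemble_monotone_general
    (p : ℤ → ℝ)
    (hp0 : ∀ n, 0 ≤ p n)
    (hpfin : (Function.support p).Finite) (hpsum : ∑' n, p n = 1)
    (k : ℕ → ℤ) (c : ℕ → ℤ → ℝ)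
    (htp : ∀ n, ∑' μ, (c μ n) ^ 2 = 1) :
    ∑' μ, (∑' n, (c μ n) ^ 2 * p n) *
        numberVar (fun m =>
          (c μ (m - k μ)) ^ 2 * p (m - k μ) / (∑' n, (c μ n) ^ 2 * p n))
      ≤ numberVar p := by
  set M := numberMean p
  have hbound := fun μ => tsum_mul_numberVar_shift_le
    (fun n => mul_nonneg (sq_nonneg (c μ n)) (hp0 n))
    (hpfin.subset (support_mul_subset_right _ _)) (k μ) M
  have hsum : HasSum (fun μ => ∑' n : ℤ, ((n : ℝ) - M) ^ 2 * (c μ n ^ 2 * p n))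
      (numberVar p) := by
    have h := hasSum_tsum_sq_mul_of_tsum_sq_eq_one htp
      (g := fun n => ((n : ℝ) - M) ^ 2 * p n) (hpfin.subset (support_mul_subset_right _ _))
    rw [tsum_sub_sq_mul_eq_numberVar_add hpfin hpsum, sub_self, zero_pow two_ne_zero,
      add_zero] at h
    simpa only [mul_left_comm] using h
  have hterm_nonneg : ∀ μ, 0 ≤ ∑' n : ℤ, ((n : ℝ) - M) ^ 2 * (c μ n ^ 2 * p n) := fun μ =>
    tsum_nonneg fun n => mul_nonneg (sq_nonneg _) (mul_nonneg (sq_nonneg _) (hp0 n))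
  exact tsum_le_of_sum_le' (hsum.nonneg hterm_nonneg) fun s =>
    (Finset.sum_le_sum fun μ _ => hbound μ).trans
      (sum_le_hasSum s (fun μ _ => hterm_nonneg μ) hsum)

/-- **The number variance is an ensemble U(1)-frameness monotone.**
For a trace-preserving U(1)-invariant Kraus family `(k μ, c μ)` acting on the
standard-form pure state with weights `p`, the average posterior variance (outcome
`μ` having probability `w μ = ∑' n, (c μ n)² * p n` and posterior weights
`m ↦ (c μ (m - k μ))² * p (m - k μ) / w μ`) is at most the variance of `p`.
(Terms with `w μ = 0` contribute `0`.) -/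
theorem u1_variance_ensemble_monotone
    (p : ℤ → ℝ)
    (hp0 : ∀ n, 0 ≤ p n) (hpneg : ∀ n < 0, p n = 0)
    (hpfin : (Function.support p).Finite) (hpsum : ∑' n, p n = 1)
    (k : ℕ → ℤ) (c : ℕ → ℤ → ℝ) (hc0 : ∀ μ n, 0 ≤ c μ n)
    (htp : ∀ n, ∑' μ, (c μ n) ^ 2 = 1) :
    ∑' μ, (∑' n, (c μ n) ^ 2 * p n) *
        numberVar (fun m =>
          (c μ (m - k μ)) ^ 2 * p (m - k μ) / (∑' n, (c μ n) ^ 2 * p n))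
      ≤ numberVar p :=
  u1_variance_ensemble_monotone_general p hp0 hpfin hpsum k c htp
end

section
/- Stochastic U(1)-frameness monotones from the number spectrum: Let S and T be nonempty finite sets (Finsets) of natural numbers and let k ∈ ℤ be such that for every t ∈ T, the integer (t : ℤ) − k is nonnegative and its natural-number value lies in S (i.e., T is contained in the shift of S by k). Then: (a) T.card ≤ S.card; and (b) for every i with 1 ≤ i ≤ T.card, letting a_i denote the i-th largest element of T and b_i the i-th largest element of S, one has a_i − min T ≤ b_i − min S. (The quantities 'i-th largest element minus the minimum' are the stochastic U(1)-frameness monotones F_i of the paper, and the cardinality of the spectrum is the analogue of the Schmidt number; by the stochastic transformation theorem, the hypothesis holds whenever the state with number spectrum S can be converted with nonzero probability into the state with number spectrum T by U(1)-invariant operations.) -/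
/-! The shift `t ↦ t - k` is strictly increasing and maps `T` into `S`, so it carries the sorted
list of `T` onto a sublist of the sorted list of `S`; this gives `|T| ≤ |S|`, and since
passing to a sublist of an ascending list can only lower the `i`-th entry from the end, the
shifted `i`-th largest element of `T` is at most the `i`-th largest element of `S`. The shift
preserves differences and `min S ≤ min T - k`, whence the inequality for the monotones. -/

theorem List.Sublist.getD_length_sub_le {α : Type*} [Preorder α] {l₁ l₂ : List α}
    (hs : l₁.Sublist l₂) (h₂ : l₂.Pairwise (· ≤ ·)) (d₁ d₂ : α) {i : ℕ} (hi : 1 ≤ i)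
    (hi₁ : i ≤ l₁.length) :
    l₁.getD (l₁.length - i) d₁ ≤ l₂.getD (l₂.length - i) d₂ := by
  induction hs generalizing i with
  | slnil => simp at hi₁; omega
  | @cons l₁ l₂ a hs ih =>
    have hi₂ : i ≤ l₂.length := hi₁.trans hs.length_le
    rw [List.length_cons, Nat.sub_add_comm hi₂, List.getD_cons_succ]
    exact ih (List.pairwise_cons.mp h₂).2 hi hi₁
  | @cons_cons l₁ l₂ a hs ih =>
    obtain ⟨ha, h₂⟩ := List.pairwise_cons.mp h₂
    simp only [List.length_cons] at hi₁ ⊢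
    rcases hi₁.lt_or_eq with hlt | rfl
    · have hi₂ : i ≤ l₂.length := (Nat.le_of_lt_succ hlt).trans hs.length_le
      rw [Nat.sub_add_comm (Nat.le_of_lt_succ hlt), Nat.sub_add_comm hi₂, List.getD_cons_succ,
        List.getD_cons_succ]
      exact ih h₂ hi (Nat.le_of_lt_succ hlt)
    · rw [Nat.sub_self, List.getD_cons_zero,
        List.getD_eq_getElem _ _ (by rw [List.length_cons]; omega)]
      rcases List.mem_cons.mp (List.getElem_mem _) with h | h
      · exact h.ge
      · exact ha _ h

theorem StrictMonoOn.map_finsetSort_sublist {α β : Type*} [LinearOrder α] [LinearOrder β]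
    {f : α → β} {s : Finset α} {t : Finset β} (hf : StrictMonoOn f s) (hst : Set.MapsTo f s t) :
    (s.sort.map f).Sublist t.sort := by
  have hsorted : (s.sort.map f).Pairwise (· < ·) :=
    List.pairwise_map.mpr <| (s.sortedLT_sort.pairwise).imp_of_mem fun ha hb hab =>
      hf (s.mem_sort _ |>.mp ha) (s.mem_sort _ |>.mp hb) hab
  have hsub : s.sort.map f ⊆ t.sort := by
    intro y hy
    obtain ⟨x, hx, rfl⟩ := List.mem_map.mp hy
    exact t.mem_sort _ |>.mpr (hst (s.mem_sort _ |>.mp hx))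
  exact List.sublist_of_subperm_of_pairwise (List.subperm_of_subset hsorted.nodup hsub)
    (hsorted.imp le_of_lt) (t.pairwise_sort _)

/-- **Stochastic U(1)-frameness monotones from the number spectrum.**
If every element `t` of the nonempty finite number spectrum `T` satisfies
`(t : ℤ) - k ≥ 0` with `((t : ℤ) - k).toNat ∈ S` (i.e. `T` is contained in the shift
of `S` by `k`), then `T.card ≤ S.card` (the spectrum cardinality is a stochastic
monotone), and for each `1 ≤ i ≤ T.card` the `i`-th largest element of `T` minus
`min T` is at most the `i`-th largest element of `S` minus `min S` (the monotones
`F_i` are nonincreasing). The `i`-th largest element of a finite set `X` is the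
entry at index `X.card - i` of the ascending sort of `X`. -/
theorem u1_spectrum_stochastic_monotones
    (S T : Finset ℕ) (hS : S.Nonempty) (hT : T.Nonempty) (k : ℤ)
    (h : ∀ t ∈ T, 0 ≤ (t : ℤ) - k ∧ ((t : ℤ) - k).toNat ∈ S) :
    T.card ≤ S.card ∧
    ∀ i : ℕ, 1 ≤ i → i ≤ T.card →
      (T.sort (· ≤ ·)).getD (T.card - i) 0 - T.min' hT ≤
        (S.sort (· ≤ ·)).getD (S.card - i) 0 - S.min' hS := by
  set shift : ℕ → ℕ := fun t => ((t : ℤ) - k).toNat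
  have hshift : ∀ t ∈ T, (shift t : ℤ) = t - k := fun t ht => Int.toNat_of_nonneg (h t ht).1
  have hmono : StrictMonoOn shift T := fun a ha b hb hab => by
    have := hshift a ha; have := hshift b hb; omega
  have hsub := hmono.map_finsetSort_sublist fun t ht => (h t ht).2
  have hlen := hsub.length_le
  simp only [List.length_map, Finset.length_sort] at hlen
  refine ⟨hlen, fun i hi hiT => ?_⟩
  have hlt : T.card - i < (T.sort (· ≤ ·)).length := by rw [Finset.length_sort]; omega
  -- default `shift 0` on the left so that `List.getD_map` applies
  have key := hsub.getD_length_sub_le (S.pairwise_sort _) (shift 0) 0 hi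
    (by simpa using hiT)
  simp only [List.length_map, Finset.length_sort, List.getD_map] at key
  set a := (T.sort (· ≤ ·)).getD (T.card - i) 0
  have ha : a ∈ T := (T.mem_sort _).mp (List.getD_eq_getElem _ _ hlt ▸ List.getElem_mem hlt)
  have hmin : S.min' hS ≤ shift (T.min' hT) := S.min'_le _ (h _ (T.min'_mem hT)).2
  have ha_shift := hshift a ha
  have hmin_shift := hshift _ (T.min'_mem hT)
  have hmin_le := T.min'_le a ha
  omega
end
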